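/- The real vector space W of rank-3 tensors t on ℝ⁴ satisfying t_{abc} = t_{bac}, Σ_{a,b} η^{ab} t_{abc} = 0 for every c, and t_{abc} + t_{bca} + t_{cab} = 0 for all a,b,c (the purely tensorial parts of torsion) has dimension 16. -/

import Mathlib

/-- The null-frame Minkowski metric on `ℝ⁴` (indices 0,1,2,3 for 1,2,3,4). -/
noncomputable def eta : Fin 4 → Fin 4 → ℝ := fun a b =>
  if (a = 0 ∧ b = 1) ∨ (a = 1 ∧ b = 0) then -1
  else if (a = 2 ∧ b = 2) ∨ (a = 3 ∧ b = 3) then 1 else 0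

/-- The space `W` of purely tensorial parts of torsion: rank-3 tensors symmetric in the first two
slots, `η`-trace-free over the first two slots, and satisfying the cyclic identity. -/
noncomputable def Wspace : Submodule ℝ (Fin 4 → Fin 4 → Fin 4 → ℝ) where
  carrier := {t | (∀ a b c, t a b c = t b a c) ∧
    (∀ c, ∑ a, ∑ b, eta a b * t a b c = 0) ∧
    (∀ a b c, t a b c + t b c a + t c a b = 0)}
  add_mem' := by
    intro t s ht hs
    simp only [Set.mem_setOf_eq] at ht hs ⊢
    refine ⟨?_, ?_, ?_⟩
    · intro a b c; simp only [Pi.add_apply, ht.1 a b c, hs.1 a b c]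
    · intro c
      simp only [Pi.add_apply, mul_add, Finset.sum_add_distrib]
      rw [ht.2.1 c, hs.2.1 c]; norm_num
    · intro a b c
      simp only [Pi.add_apply]
      linear_combination ht.2.2 a b c + hs.2.2 a b c
  zero_mem' := by
    refine ⟨by intro a b c; simp, by intro c; simp, by intro a b c; simp⟩
  smul_mem' := by
    intro r t ht
    simp only [Set.mem_setOf_eq] at ht ⊢
    refine ⟨?_, ?_, ?_⟩
    · intro a b c; simp only [Pi.smul_apply, smul_eq_mul, ht.1 a b c]
    · intro c
      have h : ∀ a b : Fin 4, eta a b * ((r • t) a b c) = r * (eta a b * t a b c) := by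
        intro a b; simp only [Pi.smul_apply, smul_eq_mul]; ring
      simp_rw [h, ← Finset.mul_sum]
      rw [ht.2.1 c, mul_zero]
    · intro a b c
      simp only [Pi.smul_apply, smul_eq_mul]
      linear_combination r * ht.2.2 a b c

/-!
Tensors symmetric in the first two slots form `Sym²V ⊗ V`, of dimension `10 · 4 = 40`. On them the
cyclic sum takes values in the totally symmetric tensors `Sym³V` and is `3 • id` there, so it maps
onto `Sym³V`, whose dimension is the number `20` of sorted index triples; its kernel, cut out by the
cyclic identity, therefore has dimension `20`. On that kernel the `η`-trace maps onto `V`, because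
`t_{abc} = 2 η_{ab} v_c - η_{bc} v_a - η_{ca} v_b` satisfies the cyclic identity and has trace
`(2 · 4 - 2) v`. Hence `dim W = 40 - 20 - 4 = 16`.
-/

open Module

theorem Submodule.finrank_eq_finrank_map_add_finrank_inf_ker {K V V₂ : Type*} [Field K]
    [AddCommGroup V] [Module K V] [AddCommGroup V₂] [Module K V₂] [FiniteDimensional K V]
    (f : V →ₗ[K] V₂) (p : Submodule K V) :
    finrank K p = finrank K (p.map f) + finrank K ↥(p ⊓ LinearMap.ker f) := by
  have hker : Submodule.comap p.subtype (LinearMap.ker f) =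
      Submodule.comap p.subtype (p ⊓ LinearMap.ker f) := by
    rw [Submodule.comap_inf, Submodule.comap_subtype_self, top_inf_eq]
  rw [← (f.domRestrict p).finrank_range_add_finrank_ker, LinearMap.range_domRestrict,
    LinearMap.ker_domRestrict, hker, (Submodule.comapSubtypeEquivOfLe inf_le_left).finrank_eq]

section SortedTriple

variable {ι : Type*} [LinearOrder ι]

abbrev SortedTriple (ι : Type*) [LinearOrder ι] := {x : ι × ι × ι // x.1 ≤ x.2.1 ∧ x.2.1 ≤ x.2.2}

/-- The middle entry is the median, written in a form that is visibly symmetric in `a, b, c`. -/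
def sortTriple (a b c : ι) : SortedTriple ι :=
  ⟨(a ⊓ b ⊓ c, (a ⊓ b) ⊔ (b ⊓ c) ⊔ (c ⊓ a), a ⊔ b ⊔ c),
    le_sup_of_le_left (le_sup_of_le_left inf_le_left),
    sup_le (sup_le (inf_le_left.trans (le_sup_left.trans le_sup_left))
      (inf_le_left.trans (le_sup_right.trans le_sup_left))) (inf_le_left.trans le_sup_right)⟩

theorem sortTriple_swap₁₂ (a b c : ι) : sortTriple a b c = sortTriple b a c := by
  ext <;> dsimp only [sortTriple] <;> ac_rfl

theorem sortTriple_swap₂₃ (a b c : ι) : sortTriple a b c = sortTriple a c b := by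
  ext <;> dsimp only [sortTriple] <;> ac_rfl

theorem sortTriple_of_sorted (x : SortedTriple ι) : sortTriple x.1.1 x.1.2.1 x.1.2.2 = x := by
  obtain ⟨⟨a, b, c⟩, hab, hbc⟩ := x
  ext <;> simp [sortTriple, hab, hbc, hab.trans hbc]

theorem forall_triple_of_sorted {P : ι → ι → ι → Prop} (h₁₂ : ∀ a b c, P a b c → P b a c)
    (h₂₃ : ∀ a b c, P a b c → P a c b) (hsorted : ∀ a b c, a ≤ b → b ≤ c → P a b c)
    (a b c : ι) : P a b c := by
  rcases le_total a b with hab | hab <;> rcases le_total b c with hbc | hbc <;>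
    rcases le_total a c with hac | hac
  all_goals first
    | exact hsorted _ _ _ (by assumption) (by assumption)
    | exact h₁₂ _ _ _ (hsorted _ _ _ (by assumption) (by assumption))
    | exact h₂₃ _ _ _ (hsorted _ _ _ (by assumption) (by assumption))
    | exact h₁₂ _ _ _ (h₂₃ _ _ _ (hsorted _ _ _ (by assumption) (by assumption)))
    | exact h₂₃ _ _ _ (h₁₂ _ _ _ (hsorted _ _ _ (by assumption) (by assumption)))
    | exact h₁₂ _ _ _ (h₂₃ _ _ _ (h₁₂ _ _ _ (hsorted _ _ _ (by assumption) (by assumption))))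

end SortedTriple

section Tensors

variable (𝕜 ι : Type*) [Field 𝕜]

def symmetricFirstPair : Submodule 𝕜 (ι → ι → ι → 𝕜) where
  carrier := {t | ∀ a b c, t a b c = t b a c}
  add_mem' hs ht a b c := by simp only [Pi.add_apply, hs a b c, ht a b c]
  zero_mem' _ _ _ := rfl
  smul_mem' r t ht a b c := by simp only [Pi.smul_apply, ht a b c]

def totallySymmetric : Submodule 𝕜 (ι → ι → ι → 𝕜) where
  carrier := {t | ∀ a b c, t a b c = t b a c ∧ t a b c = t a c b}
  add_mem' hs ht a b c :=
    ⟨by simp only [Pi.add_apply, (hs a b c).1, (ht a b c).1],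
      by simp only [Pi.add_apply, (hs a b c).2, (ht a b c).2]⟩
  zero_mem' _ _ _ := ⟨rfl, rfl⟩
  smul_mem' r t ht a b c :=
    ⟨by simp only [Pi.smul_apply, (ht a b c).1], by simp only [Pi.smul_apply, (ht a b c).2]⟩

def cyclicSum : (ι → ι → ι → 𝕜) →ₗ[𝕜] (ι → ι → ι → 𝕜) where
  toFun t a b c := t a b c + t b c a + t c a b
  map_add' s t := by ext; simp only [Pi.add_apply]; ring
  map_smul' r t := by ext; simp only [Pi.smul_apply, smul_eq_mul, RingHom.id_apply]; ring

/-- Tensors of Young symmetry type `(2,1)`. -/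
def hookTensors : Submodule 𝕜 (ι → ι → ι → 𝕜) :=
  symmetricFirstPair 𝕜 ι ⊓ LinearMap.ker (cyclicSum 𝕜 ι)

variable {𝕜 ι}

theorem cyclicSum_apply (t : ι → ι → ι → 𝕜) (a b c : ι) :
    cyclicSum 𝕜 ι t a b c = t a b c + t b c a + t c a b := rfl

def symmetricFirstPairEquiv : symmetricFirstPair 𝕜 ι ≃ₗ[𝕜] (Sym2 ι → ι → 𝕜) where
  toFun t := Sym2.lift ⟨fun a b => t.1 a b, fun a b => funext (t.2 a b)⟩
  invFun f := ⟨fun a b c => f s(a, b) c, fun a b c => congrFun (congrArg f Sym2.eq_swap) c⟩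
  map_add' s t := by ext z; induction z using Sym2.ind; rfl
  map_smul' r t := by ext z; induction z using Sym2.ind; rfl
  left_inv t := rfl
  right_inv f := by ext z; induction z using Sym2.ind; rfl

theorem finrank_symmetricFirstPair [Fintype ι] :
    finrank 𝕜 (symmetricFirstPair 𝕜 ι) = Fintype.card (Sym2 ι) * Fintype.card ι := by
  simp [symmetricFirstPairEquiv.finrank_eq, Module.finrank_pi_fintype]

theorem apply_sortTriple_of_mem_totallySymmetric [LinearOrder ι] {t : ι → ι → ι → 𝕜}
    (ht : t ∈ totallySymmetric 𝕜 ι) (a b c : ι) :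
    t (sortTriple a b c).1.1 (sortTriple a b c).1.2.1 (sortTriple a b c).1.2.2 = t a b c := by
  refine forall_triple_of_sorted (P := fun a b c => t (sortTriple a b c).1.1
    (sortTriple a b c).1.2.1 (sortTriple a b c).1.2.2 = t a b c) ?_ ?_ ?_ a b c
  · intro a b c h
    rwa [← sortTriple_swap₁₂, ← (ht a b c).1]
  · intro a b c h
    rwa [← sortTriple_swap₂₃, ← (ht a b c).2]
  · intro a b c hab hbc
    rw [sortTriple_of_sorted ⟨(a, b, c), hab, hbc⟩]

def totallySymmetricEquiv [LinearOrder ι] :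
    totallySymmetric 𝕜 ι ≃ₗ[𝕜] (SortedTriple ι → 𝕜) where
  toFun t x := t.1 x.1.1 x.1.2.1 x.1.2.2
  invFun f := ⟨fun a b c => f (sortTriple a b c),
    fun a b c => ⟨congrArg f (sortTriple_swap₁₂ a b c), congrArg f (sortTriple_swap₂₃ a b c)⟩⟩
  map_add' _ _ := rfl
  map_smul' _ _ := rfl
  left_inv t := Subtype.ext <| funext₃ (apply_sortTriple_of_mem_totallySymmetric t.2)
  right_inv f := funext fun x => congrArg f (sortTriple_of_sorted x)

theorem finrank_totallySymmetric [LinearOrder ι] [Fintype ι] :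
    finrank 𝕜 (totallySymmetric 𝕜 ι) = Fintype.card (SortedTriple ι) := by
  simp [totallySymmetricEquiv.finrank_eq]

theorem totallySymmetric_le_symmetricFirstPair :
    totallySymmetric 𝕜 ι ≤ symmetricFirstPair 𝕜 ι :=
  fun _ ht a b c => (ht a b c).1

theorem cyclicSum_mem_totallySymmetric {t : ι → ι → ι → 𝕜} (ht : t ∈ symmetricFirstPair 𝕜 ι) :
    cyclicSum 𝕜 ι t ∈ totallySymmetric 𝕜 ι := by
  intro a b c
  simp only [cyclicSum_apply]
  constructor <;> rw [ht b a c, ht a c b, ht c b a] <;> ring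

theorem cyclicSum_of_mem_totallySymmetric {t : ι → ι → ι → 𝕜} (ht : t ∈ totallySymmetric 𝕜 ι) :
    cyclicSum 𝕜 ι t = (3 : 𝕜) • t := by
  ext a b c
  rw [cyclicSum_apply, Pi.smul_apply, Pi.smul_apply, Pi.smul_apply, smul_eq_mul,
    (ht b c a).2, ← (ht a b c).1, (ht c a b).1, ← (ht a b c).2]
  ring

theorem map_cyclicSum_symmetricFirstPair (h3 : (3 : 𝕜) ≠ 0) :
    (symmetricFirstPair 𝕜 ι).map (cyclicSum 𝕜 ι) = totallySymmetric 𝕜 ι := by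
  refine le_antisymm ?_ fun s hs => ⟨(3 : 𝕜)⁻¹ • s, ?_, ?_⟩
  · rintro _ ⟨t, ht, rfl⟩
    exact cyclicSum_mem_totallySymmetric ht
  · exact (symmetricFirstPair 𝕜 ι).smul_mem _ (totallySymmetric_le_symmetricFirstPair hs)
  · rw [map_smul, cyclicSum_of_mem_totallySymmetric hs, smul_smul, inv_mul_cancel₀ h3, one_smul]

theorem finrank_totallySymmetric_add_finrank_hookTensors [Fintype ι] (h3 : (3 : 𝕜) ≠ 0) :
    finrank 𝕜 (totallySymmetric 𝕜 ι) + finrank 𝕜 (hookTensors 𝕜 ι) =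
      finrank 𝕜 (symmetricFirstPair 𝕜 ι) := by
  rw [(symmetricFirstPair 𝕜 ι).finrank_eq_finrank_map_add_finrank_inf_ker (cyclicSum 𝕜 ι),
    map_cyclicSum_symmetricFirstPair h3, hookTensors]

def hookOfVector (h : Matrix ι ι 𝕜) (v : ι → 𝕜) : ι → ι → ι → 𝕜 :=
  fun a b c => 2 * h a b * v c - h b c * v a - h c a * v b

theorem hookOfVector_mem {h : Matrix ι ι 𝕜} (hh : h.IsSymm) (v : ι → 𝕜) :
    hookOfVector h v ∈ hookTensors 𝕜 ι := by
  refine ⟨fun a b c => ?_, funext₃ fun a b c => ?_⟩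
  · simp only [hookOfVector, hh.apply a b, hh.apply c b, hh.apply a c]; ring
  · simp only [cyclicSum_apply, hookOfVector, Pi.zero_apply]; ring

variable [Fintype ι]

def metricTrace (g : Matrix ι ι 𝕜) : (ι → ι → ι → 𝕜) →ₗ[𝕜] (ι → 𝕜) where
  toFun t c := ∑ a, ∑ b, g a b * t a b c
  map_add' s t := by ext; simp only [Pi.add_apply, mul_add, Finset.sum_add_distrib]
  map_smul' r t := by
    ext; simp only [Pi.smul_apply, smul_eq_mul, RingHom.id_apply, Finset.mul_sum, mul_left_comm]

theorem metricTrace_apply (g : Matrix ι ι 𝕜) (t : ι → ι → ι → 𝕜) (c : ι) :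
    metricTrace g t c = ∑ a, ∑ b, g a b * t a b c := rfl

theorem metricTrace_hookOfVector [DecidableEq ι] {g h : Matrix ι ι 𝕜} (hgh : g * h = 1)
    (hh : h.IsSymm) (v : ι → 𝕜) :
    metricTrace g (hookOfVector h v) = (2 * Fintype.card ι - 2 : 𝕜) • v := by
  have hhg : h * g = 1 := mul_eq_one_comm.mp hgh
  have hdiag : ∑ a, ∑ b, g a b * h a b = Fintype.card ι := by
    have := congrArg Matrix.trace hgh
    rw [Matrix.trace_one, Matrix.trace] at this
    simpa only [Matrix.diag_apply, Matrix.mul_apply, hh.apply] using this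
  ext c
  have e1 : ∑ a, ∑ b, g a b * (2 * h a b * v c) = 2 * Fintype.card ι * v c := by
    simp_rw [show ∀ a b, g a b * (2 * h a b * v c) = g a b * h a b * (2 * v c) by intros; ring,
      ← Finset.sum_mul, hdiag]
    ring
  have e2 : ∑ a, ∑ b, g a b * (h b c * v a) = v c := by
    simp_rw [show ∀ a b, g a b * (h b c * v a) = g a b * h b c * v a by intros; ring,
      ← Finset.sum_mul, ← Matrix.mul_apply, hgh, Matrix.one_apply, ite_mul, one_mul, zero_mul,
      Finset.sum_ite_eq', Finset.mem_univ, if_true]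
  have e3 : ∑ a, ∑ b, g a b * (h c a * v b) = v c := by
    rw [Finset.sum_comm]
    simp_rw [show ∀ b a, g a b * (h c a * v b) = h c a * g a b * v b by intros; ring,
      ← Finset.sum_mul, ← Matrix.mul_apply, hhg, Matrix.one_apply, ite_mul, one_mul, zero_mul,
      Finset.sum_ite_eq, Finset.mem_univ, if_true]
  simp only [metricTrace_apply, hookOfVector, Pi.smul_apply, smul_eq_mul, mul_sub,
    Finset.sum_sub_distrib, e1, e2, e3]
  ring

theorem map_metricTrace_hookTensors [DecidableEq ι] {g h : Matrix ι ι 𝕜} (hgh : g * h = 1)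
    (hh : h.IsSymm) (hn : (2 * Fintype.card ι - 2 : 𝕜) ≠ 0) :
    (hookTensors 𝕜 ι).map (metricTrace g) = ⊤ := by
  refine eq_top_iff.2 fun v _ => ⟨hookOfVector h ((2 * Fintype.card ι - 2 : 𝕜)⁻¹ • v),
    hookOfVector_mem hh _, ?_⟩
  rw [metricTrace_hookOfVector hgh hh, smul_smul, mul_inv_cancel₀ hn, one_smul]

end Tensors

theorem eta_mul_eta : Matrix.of eta * Matrix.of eta = 1 := by
  ext i j
  fin_cases i <;> fin_cases j <;> simp [Matrix.mul_apply, eta]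

theorem eta_isSymm : (Matrix.of eta).IsSymm := by
  ext i j
  fin_cases i <;> fin_cases j <;> simp [eta]

theorem Wspace_eq :
    Wspace = hookTensors ℝ (Fin 4) ⊓ LinearMap.ker (metricTrace (Matrix.of eta)) := by
  ext t
  exact ⟨fun ⟨hs, htr, hc⟩ => ⟨⟨hs, funext₃ hc⟩, funext htr⟩,
    fun ⟨⟨hs, hc⟩, htr⟩ => ⟨hs, congrFun htr, fun a b c => congrFun₃ hc a b c⟩⟩

theorem Wspace_finrank : Module.finrank ℝ Wspace = 16 := by
  have hcyclic :=
    finrank_totallySymmetric_add_finrank_hookTensors (𝕜 := ℝ) (ι := Fin 4) three_ne_zero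
  have htrace := (hookTensors ℝ (Fin 4)).finrank_eq_finrank_map_add_finrank_inf_ker
    (metricTrace (Matrix.of eta))
  rw [map_metricTrace_hookTensors eta_mul_eta eta_isSymm (by norm_num), finrank_top,
    finrank_fin_fun, ← Wspace_eq] at htrace
  have hSym2 : Fintype.card (Sym2 (Fin 4)) = 10 := rfl
  have hsorted : Fintype.card (SortedTriple (Fin 4)) = 20 := rfl
  rw [finrank_symmetricFirstPair, finrank_totallySymmetric, hSym2, hsorted,
    Fintype.card_fin] at hcyclic
  omega
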